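/- arXiv:0706.1477 — 4 statements merged into one kernel-verified Lean document; each statement's English description precedes it below -/
import Mathlib

section
/- Let f₁,…,f_s ∈ ℤ[x₁,…,x_n] be polynomials and let V ⊆ ℂⁿ be their common zero set. For any coefficients (α_{i,j}), i=1..s, j=1..n+1, in ℂ that are algebraically independent over ℚ, the n+1 linear combinations g_j = Σ_{i=1}^s α_{i,j} f_i have common zero set exactly V. -/
open MvPolynomial

/-!
If `x ∈ ℂⁿ` kills every `g_j` but `f_{i₀}(x) ≠ 0`, then each relation `g_j(x) = 0` can be solved
for `α_{i₀,j}`, so all `s(n+1)` coefficients are algebraic over the ring generated by the `n`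
coordinates of `x` and the `(s-1)(n+1)` coefficients `α_{i,j}`, `i ≠ i₀`. In the algebraic matroid
of `ℂ` over `ℚ`, an independent set inside the closure of a set `X` has at most `#X` elements,
and `s(n+1) > n + (s-1)(n+1)`.
-/

section

variable {R A : Type*} [CommRing R] [CommRing A] [IsDomain A] [Algebra R A]

theorem AlgebraicIndependent.card_le_encard_of_isAlgebraic [Nontrivial R] [FaithfulSMul R A]
    {ι : Type*} {x : ι → A} (hx : AlgebraicIndependent R x) {X : Set A}
    (halg : ∀ i, IsAlgebraic (Algebra.adjoin R X) (x i)) :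
    ENat.card ι ≤ X.encard := by
  let M := AlgebraicIndependent.matroid R A
  have hI : M.Indep (Set.range x) := hx.to_subtype_range
  have hIX : Set.range x ⊆ M.closure X := by
    rintro _ ⟨i, rfl⟩
    rw [AlgebraicIndependent.matroid_closure_eq, SetLike.mem_coe, Subalgebra.mem_algebraicClosure]
    exact halg i
  calc ENat.card ι ≤ (Set.range x).encard := hx.injective.encard_range
    _ ≤ M.eRk (M.closure X) := hI.encard_le_eRk_of_subset hIX
    _ = M.eRk X := M.eRk_closure_eq X
    _ ≤ X.encard := M.eRk_le_encard X

theorem isAlgebraic_adjoin_of_sum_mul_aeval_eq_zero {σ ι : Type*} [Fintype ι]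
    (f : ι → MvPolynomial σ ℤ) (a : ι → A) (x : σ → A)
    (h : ∑ i, a i * aeval x (f i) = 0) {i₀ : ι} (hi₀ : aeval x (f i₀) ≠ 0) {X : Set A}
    (hxX : Set.range x ⊆ X) (haX : ∀ i ≠ i₀, a i ∈ X) :
    IsAlgebraic (Algebra.adjoin R X) (a i₀) := by
  classical
  set S := Algebra.adjoin R X
  have hval : ∀ i, aeval x (f i) ∈ S := fun i =>
    eval₂_mem (fun _ _ => by simp [intCast_mem])
      (fun k => Algebra.subset_adjoin (hxX ⟨k, rfl⟩))
  have hprod : aeval x (f i₀) * a i₀ ∈ S := by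
    have hsplit := Finset.add_sum_erase Finset.univ (fun i => a i * aeval x (f i))
      (Finset.mem_univ i₀)
    rw [h, add_eq_zero_iff_eq_neg, mul_comm] at hsplit
    rw [hsplit]
    exact neg_mem (sum_mem fun i hi => mul_mem
      (Algebra.subset_adjoin (haX i (Finset.ne_of_mem_erase hi))) (hval i))
  exact IsAlgebraic.of_mul (mem_nonZeroDivisors_of_ne_zero hi₀)
    (isAlgebraic_algebraMap (⟨_, hval i₀⟩ : S)) (isAlgebraic_algebraMap (⟨_, hprod⟩ : S))

end

/-- Lemma 3: generic (algebraically independent) linear combinations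
`g_j = ∑ i α_{i,j} f_i` define the same variety as `f_1, …, f_s`. -/
theorem stmt0 (n s : ℕ) (f : Fin s → MvPolynomial (Fin n) ℤ)
    (α : Fin s → Fin (n + 1) → ℂ)
    (hα : AlgebraicIndependent ℚ (fun p : Fin s × Fin (n + 1) => α p.1 p.2)) :
    {x : Fin n → ℂ | ∀ j : Fin (n + 1),
        ∑ i : Fin s, α i j * aeval x (f i) = 0} =
    {x : Fin n → ℂ | ∀ i : Fin s, aeval x (f i) = 0} := by
  ext x
  refine ⟨fun hx => ?_, fun hx j => Finset.sum_eq_zero fun i _ => by rw [hx i, mul_zero]⟩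
  simp only [Set.mem_ofPred_eq] at hx ⊢
  by_contra! ⟨i₀, hi₀⟩
  classical
  let X : Finset ℂ :=
    Finset.univ.image x ∪ (({i₀}ᶜ ×ˢ Finset.univ).image fun p => α p.1 p.2)
  have hαX : ∀ i ≠ i₀, ∀ j, α i j ∈ (X : Set ℂ) := fun i hi j => by
    simpa [X] using Or.inr ⟨i, hi, j, rfl⟩
  have halg : ∀ p : Fin s × Fin (n + 1),
      IsAlgebraic (Algebra.adjoin ℚ (X : Set ℂ)) (α p.1 p.2) := by
    rintro ⟨i, j⟩
    by_cases hi : i = i₀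
    · subst hi
      exact isAlgebraic_adjoin_of_sum_mul_aeval_eq_zero f (α · j) x (hx j) hi₀
        (by rintro _ ⟨k, rfl⟩; simp [X]) (fun i hi => hαX i hi j)
    · exact isAlgebraic_algebraMap (⟨α i j, Algebra.subset_adjoin (hαX i hi j)⟩ :
        Algebra.adjoin ℚ (X : Set ℂ))
  have hcard : s * (n + 1) ≤ X.card := by
    have := hα.card_le_encard_of_isAlgebraic halg
    rw [Set.encard_coe_eq_coe_finsetCard] at this
    simp only [ENat.card_eq_coe_fintype_card, Fintype.card_prod, Fintype.card_fin] at this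
    exact_mod_cast this
  have hX : X.card ≤ n + (s - 1) * (n + 1) := by
    refine Finset.card_union_le _ _ |>.trans (add_le_add ?_ ?_)
    · simpa using Finset.card_image_le (s := Finset.univ) (f := x)
    · refine Finset.card_image_le.trans ?_
      simp [Finset.card_compl]
  have hs : s = (s - 1) + 1 := (Nat.succ_pred_eq_of_pos i₀.pos).symm
  rw [hs] at hcard
  nlinarith
end

section
/- Any variety V ⊆ ℂⁿ defined as the common zero set of finitely many polynomials f₁,…,f_s ∈ ℂ[x₁,…,x_n] can be defined as the common zero set of at most n+1 polynomials, each a ℂ-linear combination of f₁,…,f_s. -/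
/-!
Kronecker's argument, run on prime ideals instead of points. Let `V` be the `K`-span of the
`f_i` in a Noetherian `K`-algebra `R` of Krull dimension at most `d`, with `K` infinite. Choose
`g_1, g_2, …` in `V` one at a time so that `g_{k+1}` avoids every minimal prime of
`(g_1, …, g_k)` not containing `V`; this is possible because a vector space over an infinite
field is not a finite union of proper subspaces. Then every prime containing `g_1, …, g_k` but
not `V` strictly contains such a minimal prime of `(g_1, …, g_{k-1})`, so its coheight is at most
`d - k`. After `d + 1` steps no such prime is left, i.e. `V` lies in the radical of
`(g_1, …, g_{d+1})`. For `ℂ[x_1, …, x_n]` take `d = n` and test against the kernels of the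
evaluations at points.
-/

open MvPolynomial

theorem Submodule.exists_mem_forall_notMem_of_finite {K R : Type*} [Field K] [Infinite K]
    [CommRing R] [Algebra K R] (V : Submodule K R) {S : Set (Ideal R)} (hS : S.Finite)
    (hV : ∀ P ∈ S, ¬ (V : Set R) ⊆ P) : ∃ v ∈ V, ∀ P ∈ S, v ∉ P := by
  have : Finite S := hS
  obtain ⟨v, hv⟩ := Submodule.exists_forall_notMem_of_forall_ne_top
    (fun P : S => ((P : Ideal R).restrictScalars K).comap V.subtype) fun P htop => hV P P.2
      fun x hx => by simpa using (Submodule.eq_top_iff'.1 htop) ⟨x, hx⟩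
  exact ⟨v, v.2, fun P hP => hv ⟨P, hP⟩⟩

section KroneckerLinearCombinations

variable {K R : Type*} [Field K] [Infinite K] [CommRing R] [IsNoetherianRing R] [Algebra K R]
  (V : Submodule K R) (d : ℕ)

theorem Submodule.exists_fin_forall_coheight_add_le (hd : ringKrullDim R ≤ d) (k : ℕ) :
    ∃ g : Fin k → R, (∀ j, g j ∈ V) ∧ ∀ p : PrimeSpectrum R, Set.range g ⊆ p.asIdeal →
      ¬ (V : Set R) ⊆ p.asIdeal → Order.coheight p + k ≤ d := by
  induction k with
  | zero =>
    refine ⟨Fin.elim0, fun j => j.elim0, fun p _ _ => ?_⟩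
    simpa using (WithBot.coe_le_coe (b := (d : ℕ∞))).1 ((Order.coheight_le_krullDim p).trans hd)
  | succ k ih =>
    obtain ⟨g, hgV, hg⟩ := ih
    let S := {P ∈ (Ideal.span (Set.range g)).minimalPrimes | ¬ (V : Set R) ⊆ P}
    obtain ⟨v, hvV, hv⟩ := V.exists_mem_forall_notMem_of_finite (S := S)
      ((Ideal.finite_minimalPrimes_of_isNoetherianRing R _).subset (Set.sep_subset _ _))
      fun P hP => hP.2
    refine ⟨Fin.snoc g v, Fin.lastCases (by simpa using hvV) (by simpa using hgV), ?_⟩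
    intro q hgq hVq
    have hgq' : Ideal.span (Set.range g) ≤ q.asIdeal := by
      rw [Ideal.span_le]
      rintro _ ⟨j, rfl⟩
      simpa using hgq ⟨j.castSucc, by simp⟩
    obtain ⟨P, hPmin, hPq⟩ := Ideal.exists_minimalPrimes_le hgq'
    have hVP : ¬ (V : Set R) ⊆ P := fun h => hVq (h.trans hPq)
    let p : PrimeSpectrum R := ⟨P, hPmin.1.1⟩
    have hpq : p < q := by
      refine lt_of_le_of_ne hPq fun hpq => hv P ⟨hPmin, hVP⟩ ?_
      have : v ∈ q.asIdeal := hgq ⟨Fin.last k, by simp⟩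
      rwa [← hpq] at this
    calc Order.coheight q + ↑(k + 1) = Order.coheight q + 1 + k := by push_cast; ring
      _ ≤ Order.coheight p + k := by gcongr; exact Order.coheight_add_one_le hpq
      _ ≤ d := hg p (fun x hx => (Ideal.span_le.1 hPmin.1.2) hx) hVP

theorem Submodule.exists_fin_subset_radical_span (hd : ringKrullDim R ≤ d) :
    ∃ g : Fin (d + 1) → R, (∀ j, g j ∈ V) ∧ (V : Set R) ⊆ (Ideal.span (Set.range g)).radical := by
  obtain ⟨g, hgV, hg⟩ := V.exists_fin_forall_coheight_add_le d hd (d + 1)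
  refine ⟨g, hgV, fun v hv => ?_⟩
  rw [SetLike.mem_coe, Ideal.radical_eq_sInf, Submodule.mem_sInf]
  rintro P ⟨hgP, hP⟩
  by_contra hvP
  have := le_add_self.trans (hg ⟨P, hP⟩ (Ideal.span_le.1 hgP) fun hVP => hvP (hVP hv))
  norm_cast at this
  omega

end KroneckerLinearCombinations

/-- Any variety in ℂⁿ defined by finitely many polynomials is defined by
`n+1` linear combinations of them. -/
theorem stmt1 (n s : ℕ) (f : Fin s → MvPolynomial (Fin n) ℂ) :
    ∃ α : Fin s → Fin (n + 1) → ℂ,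
      {x : Fin n → ℂ | ∀ j : Fin (n + 1),
          ∑ i : Fin s, α i j * eval x (f i) = 0} =
      {x : Fin n → ℂ | ∀ i : Fin s, eval x (f i) = 0} := by
  obtain ⟨g, hgV, hVg⟩ :=
    (Submodule.span ℂ (Set.range f)).exists_fin_subset_radical_span n (by simp)
  choose c hc using fun j => (Submodule.mem_span_range_iff_exists_fun ℂ).1 (hgV j)
  refine ⟨fun i j => c j i, Set.ext fun x => ⟨fun hx i => ?_, fun hx j => by simp [hx.out]⟩⟩
  have hg : Ideal.span (Set.range g) ≤ RingHom.ker (eval x) := by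
    rw [Ideal.span_le]
    rintro _ ⟨j, rfl⟩
    simpa [← hc j, smul_eval] using hx j
  simpa using
    (RingHom.ker_isPrime (eval x)).radical_le_iff.2 hg (hVg (Submodule.subset_span ⟨i, rfl⟩))
end

section
/- Let P ∈ ℤ[y₁,…,y_r] be a nonzero polynomial of degree less than D in each variable, with all coefficients of absolute value less than C. If integers β₁,…,β_r satisfy β₁ ≥ C and β_{j+1} ≥ C·D^j·β_j^D for 1 ≤ j ≤ r−1, then P(β₁,…,β_r) ≠ 0. -/
/-!
Expand `P` in its last variable: `P(β) = ∑ₖ Qₖ(β₁, …, β_{r-1}) β_rᵏ`. By induction on `r` the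
top coefficient `Q_d(β₁, …, β_{r-1})` is a nonzero integer, while every `Qₖ(β₁, …, β_{r-1})` is
at most `(C - 1) D^(r-1) ∏_{j<r} β_j^(D-1) < β_r` in absolute value, the last inequality being
where the growth condition enters. A nonzero integer polynomial whose coefficients are all
smaller than `b` in absolute value does not vanish at `b`: its top term outweighs the others, as
with base-`b` digits.
-/

open MvPolynomial Finset

theorem Polynomial.eval_ne_zero_of_abs_coeff_lt {p : Polynomial ℤ} (hp : p ≠ 0) {b : ℤ}
    (hb : ∀ i, |p.coeff i| < b) : p.eval b ≠ 0 := by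
  have hb0 : 0 ≤ b := (abs_nonneg _).trans (hb 0).le
  have hlow : |∑ i ∈ range p.natDegree, p.coeff i * b ^ i| ≤ b ^ p.natDegree - 1 := calc
    _ ≤ ∑ i ∈ range p.natDegree, (b - 1) * b ^ i := by
      refine (abs_sum_le_sum_abs _ _).trans (sum_le_sum fun i _ => ?_)
      rw [abs_mul, abs_pow, abs_of_nonneg hb0]
      exact mul_le_mul_of_nonneg_right (Int.le_sub_one_of_lt (hb i)) (pow_nonneg hb0 i)
    _ = b ^ p.natDegree - 1 := by rw [← mul_sum, mul_comm, geom_sum_mul]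
  have htop : b ^ p.natDegree ≤ |p.leadingCoeff * b ^ p.natDegree| := by
    rw [abs_mul, abs_pow, abs_of_nonneg hb0]
    exact le_mul_of_one_le_left (pow_nonneg hb0 _) (Int.one_le_abs (leadingCoeff_ne_zero.2 hp))
  rw [eval_eq_sum_range, sum_range_succ]
  intro h
  rw [add_eq_zero_iff_neg_eq, ← leadingCoeff] at h
  rw [← h, abs_neg] at htop
  omega

namespace MvPolynomial

section Bounds

variable {σ R : Type*} [Fintype σ]

theorem card_support_le_pow [CommSemiring R] {P : MvPolynomial σ R} {D : ℕ}
    (hdeg : ∀ m, P.coeff m ≠ 0 → ∀ i, m i < D) : #P.support ≤ D ^ Fintype.card σ := by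
  classical
  calc #P.support ≤ #(Fintype.piFinset fun _ : σ => range D) :=
        card_le_card_of_injOn (fun m i => m i)
          (fun m hm => Fintype.mem_piFinset.2 fun i =>
            mem_range.2 (hdeg m (mem_support_iff.1 hm) i))
          (fun m _ m' _ h => DFunLike.coe_injective h)
    _ = D ^ Fintype.card σ := by simp

theorem abs_eval_le [CommRing R] [LinearOrder R] [IsStrictOrderedRing R] {P : MvPolynomial σ R}
    {c : R} {D : ℕ} (hdeg : ∀ m, P.coeff m ≠ 0 → ∀ i, m i < D) (hcoeff : ∀ m, |P.coeff m| ≤ c)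
    (x : σ → R) (hx : ∀ i, 1 ≤ |x i|) :
    |eval x P| ≤ c * D ^ Fintype.card σ * ∏ i, |x i| ^ (D - 1) := by
  have hc : 0 ≤ c := (abs_nonneg _).trans (hcoeff 0)
  calc |eval x P| ≤ ∑ m ∈ P.support, |P.coeff m * ∏ i, x i ^ m i| := by
        rw [eval_eq']; exact abs_sum_le_sum_abs _ _
    _ ≤ ∑ _m ∈ P.support, c * ∏ i, |x i| ^ (D - 1) := by
        refine sum_le_sum fun m hm => ?_
        rw [abs_mul, abs_prod]
        refine mul_le_mul (hcoeff m) (prod_le_prod (fun _ _ => abs_nonneg _) fun i _ => ?_)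
          (by positivity) hc
        have := hdeg m (mem_support_iff.1 hm) i
        rw [abs_pow]
        exact pow_le_pow_right₀ (hx i) (by omega)
    _ = #P.support * (c * ∏ i, |x i| ^ (D - 1)) := by rw [sum_const, nsmul_eq_mul]
    _ ≤ (D ^ Fintype.card σ : ℕ) * (c * ∏ i, |x i| ^ (D - 1)) := by
        gcongr; exact card_support_le_pow hdeg
    _ = c * D ^ Fintype.card σ * ∏ i, |x i| ^ (D - 1) := by push_cast; ring

end Bounds

section LastVariable

variable (R : Type*) [CommSemiring R] (n : ℕ)

noncomputable def lastVarEquiv :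
    MvPolynomial (Fin (n + 1)) R ≃ₐ[R] Polynomial (MvPolynomial (Fin n) R) :=
  (renameEquiv R finSuccEquivLast).trans (optionEquivLeft R (Fin n))

variable {R n}

theorem eval_eq_eval_lastVarEquiv (β : Fin (n + 1) → R) (P : MvPolynomial (Fin (n + 1)) R) :
    eval β P =
      (Polynomial.map (eval (Fin.init β)) (lastVarEquiv R n P)).eval (β (Fin.last n)) := by
  rw [lastVarEquiv, AlgEquiv.trans_apply, renameEquiv_apply, ← optionEquivLeft_elim_eval,
    eval_rename]
  congr 2
  funext i
  refine Fin.lastCases ?_ (fun j => ?_) i <;> simp [Fin.init]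

theorem coeff_coeff_lastVarEquiv (P : MvPolynomial (Fin (n + 1)) R) (k : ℕ) (m : Fin n →₀ ℕ) :
    coeff m ((lastVarEquiv R n P).coeff k) =
      coeff ((m.optionElim k).equivMapDomain finSuccEquivLast.symm) P := by
  rw [lastVarEquiv, AlgEquiv.trans_apply, optionEquivLeft_coeff_coeff, renameEquiv_apply,
    ← coeff_rename_mapDomain _ finSuccEquivLast.injective, ← Finsupp.equivMapDomain_eq_mapDomain,
    ← Finsupp.equivMapDomain_trans, Equiv.symm_trans_self, Finsupp.equivMapDomain_refl]

theorem lastVarEquiv_coeff_degree_lt {P : MvPolynomial (Fin (n + 1)) R} {D : ℕ}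
    (hdeg : ∀ m, P.coeff m ≠ 0 → ∀ i, m i < D) (k : ℕ) :
    ∀ m, ((lastVarEquiv R n P).coeff k).coeff m ≠ 0 → ∀ i, m i < D := by
  intro m hm i
  rw [coeff_coeff_lastVarEquiv] at hm
  simpa using hdeg _ hm i.castSucc

end LastVariable

end MvPolynomial

def IsRapidlyGrowing (C : ℤ) (D : ℕ) {r : ℕ} (β : Fin r → ℤ) : Prop :=
  (∀ h : 0 < r, C ≤ β ⟨0, h⟩) ∧
    ∀ j : ℕ, (hj : j + 1 < r) → C * (D : ℤ) ^ (j + 1) * β ⟨j, by omega⟩ ^ D ≤ β ⟨j + 1, hj⟩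

namespace IsRapidlyGrowing

variable {C : ℤ} {D : ℕ} {r : ℕ} {β : Fin r → ℤ}

theorem le (hβ : IsRapidlyGrowing C D β) (hC : 0 < C) (hD : 1 ≤ D) :
    ∀ j (hj : j < r), C ≤ β ⟨j, hj⟩
  | 0, hj => hβ.1 hj
  | j + 1, hj => by
    have hb := hβ.le hC hD j (by omega)
    have hDpow : 1 ≤ (D : ℤ) ^ (j + 1) := one_le_pow₀ (by exact_mod_cast hD)
    have hbpow : 1 ≤ β ⟨j, by omega⟩ ^ D := one_le_pow₀ (by omega)
    calc C ≤ C * ((D : ℤ) ^ (j + 1) * β ⟨j, by omega⟩ ^ D) :=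
          le_mul_of_one_le_right hC.le (one_le_mul_of_one_le_of_one_le hDpow hbpow)
      _ ≤ β ⟨j + 1, hj⟩ := by rw [← mul_assoc]; exact hβ.2 j hj

theorem mul_prod_le (hβ : IsRapidlyGrowing C D β) (hC : 0 < C) (hD : 1 ≤ D) :
    ∀ n (hn : n < r), C * (D : ℤ) ^ n * ∏ j : Fin n, β ⟨j, by omega⟩ ^ (D - 1) ≤ β ⟨n, hn⟩
  | 0, hn => by simpa using hβ.1 hn
  | n + 1, hn => by
    have ih := hβ.mul_prod_le hC hD n (by omega)
    set b := β ⟨n, by omega⟩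
    have hb : 0 ≤ b := hC.le.trans (hβ.le hC hD n _)
    have hDD : (D : ℤ) ≤ C * (D : ℤ) ^ (n + 1) :=
      (le_self_pow₀ (by exact_mod_cast hD) (by omega)).trans
        (le_mul_of_one_le_left (by positivity) hC)
    calc C * (D : ℤ) ^ (n + 1) * ∏ j : Fin (n + 1), β ⟨j, by omega⟩ ^ (D - 1)
        = D * b ^ (D - 1) * (C * (D : ℤ) ^ n * ∏ j : Fin n, β ⟨j, by omega⟩ ^ (D - 1)) := by
          rw [Fin.prod_univ_castSucc]; simp only [Fin.val_castSucc, Fin.val_last]; ring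
      _ ≤ D * b ^ (D - 1) * b := by gcongr
      _ = D * b ^ D := by rw [mul_assoc, ← pow_succ, Nat.sub_add_cancel hD]
      _ ≤ C * (D : ℤ) ^ (n + 1) * b ^ D := by gcongr
      _ ≤ β ⟨n + 1, hn⟩ := hβ.2 n hn

theorem sub_one_mul_prod_abs_lt (hβ : IsRapidlyGrowing C D β) (hC : 0 < C) (hD : 1 ≤ D)
    (n : ℕ) (hn : n < r) :
    (C - 1) * (D : ℤ) ^ n * ∏ j : Fin n, |β ⟨j, by omega⟩| ^ (D - 1) < β ⟨n, hn⟩ := by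
  have hpos : ∀ j : Fin n, 0 < β ⟨j, by omega⟩ := fun j => hC.trans_le (hβ.le hC hD j _)
  have hX : 0 < (D : ℤ) ^ n * ∏ j : Fin n, β ⟨j, by omega⟩ ^ (D - 1) :=
    mul_pos (pow_pos (by exact_mod_cast hD) n) (prod_pos fun j _ => pow_pos (hpos j) _)
  simp only [abs_of_pos (hpos _)]
  calc (C - 1) * (D : ℤ) ^ n * ∏ j : Fin n, β ⟨j, by omega⟩ ^ (D - 1)
      < C * (D : ℤ) ^ n * ∏ j : Fin n, β ⟨j, by omega⟩ ^ (D - 1) := by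
        rw [mul_assoc, mul_assoc]; exact mul_lt_mul_of_pos_right (by omega) hX
    _ ≤ β ⟨n, hn⟩ := hβ.mul_prod_le hC hD n hn

end IsRapidlyGrowing

/-- No big integer roots: a nonzero integer polynomial of degree `< D` in each
variable, with coefficients of absolute value `< C`, does not vanish at a
rapidly growing integer sequence. -/
theorem stmt4 (r : ℕ) (P : MvPolynomial (Fin r) ℤ) (hP : P ≠ 0)
    (C : ℤ) (D : ℕ) (hC : 0 < C) (hD : 1 ≤ D)
    (hdeg : ∀ m : Fin r →₀ ℕ, P.coeff m ≠ 0 → ∀ i, m i < D)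
    (hcoeff : ∀ m, |P.coeff m| < C)
    (β : Fin r → ℤ)
    (hβ1 : ∀ h : 0 < r, C ≤ β ⟨0, h⟩)
    (hβ : ∀ j : ℕ, (hj : j + 1 < r) →
      C * (D : ℤ) ^ (j + 1) * (β ⟨j, by omega⟩) ^ D ≤ β ⟨j + 1, hj⟩) :
    MvPolynomial.eval β P ≠ 0 := by
  induction r with
  | zero =>
    rw [eq_C_of_isEmpty P] at hP ⊢
    simpa using hP
  | succ n ih =>
    have hgrowth : IsRapidlyGrowing C D β := ⟨hβ1, hβ⟩
    set q := lastVarEquiv ℤ n P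
    have hdeg' := lastVarEquiv_coeff_degree_lt hdeg
    have hcoeff' : ∀ k m, |(q.coeff k).coeff m| < C := fun k m => by
      rw [coeff_coeff_lastVarEquiv]; exact hcoeff _
    have hlead : eval (Fin.init β) q.leadingCoeff ≠ 0 :=
      ih _ (Polynomial.leadingCoeff_ne_zero.2 (EmbeddingLike.map_ne_zero_iff.2 hP)) (hdeg' _)
        (hcoeff' _) _ (fun _ => hβ1 (by omega)) (fun j _ => hβ j (by omega))
    rw [eval_eq_eval_lastVarEquiv]
    refine Polynomial.eval_ne_zero_of_abs_coeff_lt ?_ fun k => ?_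
    · exact Polynomial.leadingCoeff_ne_zero.1
        (by rwa [Polynomial.leadingCoeff_map_of_leadingCoeff_ne_zero _ hlead])
    rw [Polynomial.coeff_map]
    calc |eval (Fin.init β) (q.coeff k)|
        ≤ (C - 1) * D ^ n * ∏ j, |Fin.init β j| ^ (D - 1) := by
          simpa using abs_eval_le (hdeg' k) (fun m => Int.le_sub_one_of_lt (hcoeff' k m))
            (Fin.init β) fun j => le_abs.2 (.inl ((by omega : 1 ≤ C).trans (hgrowth.le hC hD j _)))
      _ < β (Fin.last n) := hgrowth.sub_one_mul_prod_abs_lt hC hD n (by omega)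
end

section
/- Let f₁,…,f_s ∈ ℂ[x₁,…,x_n] each of degree at most d ≥ 1 with s ≥ 1. The number of satisfiable sign conditions of (f₁,…,f_s), i.e., the number of distinct tuples (S₁,…,S_s) ∈ {0,1}^s of the form S_i = (if f_i(x) = 0 then 0 else 1) for some x ∈ ℂⁿ, is at most (1 + s·d)^{2n} (more generally, bounded by (sd)^{O(n)}). -/
open MvPolynomial

/-- The number of satisfiable sign conditions (zero patterns) of `s`
polynomials of degree at most `d` on ℂⁿ is at most `(1 + s·d)^(2n)`. -/
theorem stmt8 (n s d : ℕ) (hs : 1 ≤ s) (hd : 1 ≤ d)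
    (f : Fin s → MvPolynomial (Fin n) ℂ)
    (hdeg : ∀ i, (f i).totalDegree ≤ d) :
    {S : Fin s → Bool | ∃ x : Fin n → ℂ,
        ∀ i, S i = false ↔ eval x (f i) = 0}.ncard ≤ (1 + s * d) ^ (2 * n) := by
  classical
  set P : Set (Fin s → Bool) := {S : Fin s → Bool | ∃ x : Fin n → ℂ,
        ∀ i, S i = false ↔ eval x (f i) = 0} with hP
  -- witnesses
  choose x hx using fun S : P => S.2
  -- the products
  set g : P → MvPolynomial (Fin n) ℂ :=
    fun S => ∏ i ∈ Finset.univ.filter (fun i => S.1 i = true), f i with hg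
  have hdegg : ∀ S : P, (g S).totalDegree ≤ s * d := by
    intro S
    refine (totalDegree_finset_prod _ _).trans ?_
    calc ∑ i ∈ Finset.univ.filter (fun i => S.1 i = true), (f i).totalDegree
        ≤ ∑ _i ∈ Finset.univ.filter (fun i => S.1 i = true), d :=
          Finset.sum_le_sum fun i _ => hdeg i
      _ = (Finset.univ.filter (fun i => S.1 i = true)).card * d := by
          rw [Finset.sum_const, smul_eq_mul]
      _ ≤ s * d := by
          exact Nat.mul_le_mul_right d ((Finset.card_filter_le _ _).trans (by simp))
  have heval : ∀ S T : P, eval (x T) (g S) =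
      ∏ i ∈ Finset.univ.filter (fun i => S.1 i = true), eval (x T) (f i) := by
    intro S T; rw [hg]; exact map_prod _ _ _
  have hdiag : ∀ S : P, eval (x S) (g S) ≠ 0 := by
    intro S
    rw [heval]
    refine Finset.prod_ne_zero_iff.mpr ?_
    intro i hi
    simp only [Finset.mem_filter] at hi
    intro h0
    have := (hx S i).mpr h0
    rw [hi.2] at this; exact Bool.true_eq_false.mp this
  have hoff : ∀ S T : P, ¬ (S.1 ≤ T.1) → eval (x T) (g S) = 0 := by
    intro S T hST
    rw [heval]
    have hST' : ∃ i, S.1 i = true ∧ T.1 i = false := by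
      by_contra hcon
      push_neg at hcon
      apply hST
      intro i
      cases hSv : S.1 i with
      | false => exact Bool.false_le _
      | true =>
        cases hTv : T.1 i with
        | false => exact absurd hTv (hcon i hSv)
        | true => exact le_rfl
    obtain ⟨i, hSi, hTi⟩ := hST'
    refine Finset.prod_eq_zero (Finset.mem_filter.mpr ⟨Finset.mem_univ i, hSi⟩) ?_
    exact (hx T i).mp hTi
  -- linear independence of g via evaluation
  have hli : LinearIndependent ℂ g := by
    refine LinearIndependent.of_comp
      (LinearMap.pi (fun T : P => (aeval (x T)).toLinearMap)) ?_
    rw [linearIndependent_iff']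
    intro t c hsum
    have key : ∀ S : P, S ∈ t → c S = 0 := by
      intro S
      induction S using WellFoundedLT.induction with
      | _ S IH =>
        intro hS
        have h0 := congrFun hsum S
        simp only [Finset.sum_apply, Pi.smul_apply, Function.comp_apply, LinearMap.pi_apply,
          AlgHom.toLinearMap_apply, Pi.zero_apply, smul_eq_mul] at h0
        have haeq : ∀ T : P, (aeval (x S)) (g T) = eval (x S) (g T) := by
          intro T
          exact DFunLike.congr_fun (coe_aeval_eq_eval (f := x S)) (g T)
        rw [Finset.sum_eq_single S] at h0
        · rw [haeq] at h0
          exact (mul_eq_zero.mp h0).resolve_right (hdiag S)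
        · intro T hT hTS
          by_cases hle : T.1 ≤ S.1
          · have hlt : T < S := lt_of_le_of_ne (Subtype.coe_le_coe.mp hle) hTS
            rw [IH T hlt hT, zero_mul]
          · rw [haeq, hoff T S hle, mul_zero]
        · intro h; exact absurd hS h
    exact key
  -- move into the finite-dimensional submodule of degree ≤ s*d polynomials
  set V := restrictDegree (Fin n) ℂ (s * d) with hV
  have hmem : ∀ S : P, g S ∈ V :=
    fun S => restrictTotalDegree_le_restrictDegree _ _ _
      ((mem_restrictTotalDegree _ _ _).mpr (hdegg S))
  set g' : P → V := fun S => ⟨g S, hmem S⟩ with hg'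
  have hli' : LinearIndependent ℂ g' :=
    LinearIndependent.of_comp V.subtype hli
  have hfinP : P.Finite := Set.toFinite _
  have : Fintype P := hfinP.fintype
  have hcard : Fintype.card P ≤ Module.finrank ℂ V :=
    hli'.fintype_card_le_finrank
  -- the dimension of V
  set I : Set (Fin n →₀ ℕ) := {m | ∀ i, m i ≤ s * d} with hI
  have hIinj : Function.Injective (fun (m : I) (i : Fin n) =>
      (⟨m.1 i, Nat.lt_succ_of_le (m.2 i)⟩ : Fin (s * d + 1))) := by
    intro a b hab
    ext i
    exact congrArg Fin.val (congrFun hab i)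
  have hIfin : Finite I := Finite.of_injective _ hIinj
  have : Fintype I := Fintype.ofFinite _
  have hdimV : Module.finrank ℂ V = Fintype.card I :=
    Module.finrank_eq_card_basis (basisRestrictSupport ℂ I)
  have hcardI : Fintype.card I ≤ (1 + s * d) ^ n := by
    calc Fintype.card I ≤ Fintype.card (Fin n → Fin (s * d + 1)) :=
          Fintype.card_le_of_injective _ hIinj
      _ = (s * d + 1) ^ n := by simp
      _ = (1 + s * d) ^ n := by ring_nf
  -- put everything together
  have h1 : P.ncard = Fintype.card P := by
    rw [Set.ncard_eq_toFinset_card', Set.toFinset_card]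
  calc P.ncard = Fintype.card P := h1
    _ ≤ (1 + s * d) ^ n := by
        refine hcard.trans ?_
        rw [hdimV]; exact hcardI
    _ ≤ (1 + s * d) ^ (2 * n) :=
        Nat.pow_le_pow_right (Nat.le_add_right 1 _) (by omega)
end
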